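/- With G2 realized in {(x,y,z): x+y+z=0} and λ₂ = (2,-1/2,-3/2), letting W_{λ₂} be the (four-element) integral Weyl group of λ₂, the four weights λ₂ - wλ₂ for w ∈ W_{λ₂} are W(G2)-conjugate to the dominant weights 0, ω₁, 2ω₂, and 2ω₁+ω₂, with the identity and the product of the two generating reflections giving the terms of sign +1 (namely 0 and 2ω₁+ω₂) and the two reflections giving sign -1 (namely ω₁ and 2ω₂). -/
import Mathlib


/- Realization of the G2 root system in the hyperplane {x+y+z=0} of ℚ³. -/
namespace G2

/-- short simple root α = (1,-1,0) -/
def sα : Fin 3 → ℚ := ![1, -1, 0]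
/-- long simple root β = (-1,2,-1) -/
def sβ : Fin 3 → ℚ := ![-1, 2, -1]

/-- the six positive roots α, β, α+β, 2α+β, 3α+β, 3α+2β -/
def posRoots : Fin 6 → (Fin 3 → ℚ) :=
  ![![1,-1,0], ![-1,2,-1], ![0,1,-1], ![1,0,-1], ![2,-1,-1], ![1,1,-2]]

/-- fundamental weight ω₁ = 2α+β -/
def ω₁ : Fin 3 → ℚ := ![1, 0, -1]
/-- fundamental weight ω₂ = 3α+2β -/
def ω₂ : Fin 3 → ℚ := ![1, 1, -2]
/-- ρ = ω₁ + ω₂ -/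
def ρ : Fin 3 → ℚ := ![2, 1, -3]

/-- the weight aω₁ + bω₂ -/
def wt (a b : ℤ) : Fin 3 → ℚ := (a : ℚ) • ω₁ + (b : ℚ) • ω₂

def dot (v w : Fin 3 → ℚ) : ℚ := ∑ i, v i * w i

/-- reflection in the root γ -/
def refl (γ : Fin 3 → ℚ) (v : Fin 3 → ℚ) : Fin 3 → ℚ :=
  v - (2 * dot v γ / dot γ γ) • γ

/-- the rotation sα ∘ sβ, of order 6 in W(G2) -/
def rot : (Fin 3 → ℚ) → (Fin 3 → ℚ) := refl sα ∘ refl sβ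

/-- the 12 elements of the Weyl group W(G2) (dihedral of order 12):
`wElt k false = rot^k`, `wElt k true = refl sα ∘ rot^k`. -/
def wElt (k : Fin 6) (b : Bool) : (Fin 3 → ℚ) → (Fin 3 → ℚ) :=
  (if b then refl sα else id) ∘ rot^[(k : ℕ)]

/-- determinant (sign) of a Weyl group element -/
def wSign (b : Bool) : ℤ := if b then -1 else 1

/-- `v` and `w` are W(G2)-conjugate -/
def conj (v w : Fin 3 → ℚ) : Prop := ∃ k b, wElt k b v = w

/-- Kostant partition function: number of ways to write `v` as a sum of
positive roots with nonnegative integer coefficients. -/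
noncomputable def kostant (v : Fin 3 → ℚ) : ℕ :=
  Set.ncard {c : Fin 6 → ℕ | ∑ i, (c i : ℚ) • posRoots i = v}

/-- The multiplicity of the weight `μ` in the irreducible finite-dimensional
G2-module of highest weight `lam`, via Kostant's multiplicity formula
`m_lam(μ) = Σ_{w ∈ W} det(w) P(w(lam+ρ) - (μ+ρ))`. -/
noncomputable def mult (lam μ : Fin 3 → ℚ) : ℤ :=
  ∑ k : Fin 6, ∑ b : Bool, wSign b * kostant (wElt k b (lam + ρ) - (μ + ρ))

/-- The multiplicity function of the induced character `Ind_T^G(e^{aω₁+bω₂})`: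
by Frobenius reciprocity its multiplicity at the irreducible with highest
weight pω₁+qω₂ is the weight multiplicity `dim V_{(p,q)}[aω₁+bω₂]`. -/
noncomputable def Ind (a b : ℤ) : ℕ × ℕ → ℤ := fun p => mult (wt p.1 p.2) (wt a b)

/-- The multiplicity function of the irreducible `V_{(a,b)}`. -/
def Virt (a b : ℤ) : ℕ × ℕ → ℤ := fun p => if ((p.1 : ℤ), (p.2 : ℤ)) = (a, b) then 1 else 0


/-- With `λ₂ = (2,-1/2,-3/2)` and integral Weyl group `W_{λ₂}` generated by the
reflections `s₁ = s_{(0,1,-1)}`, `s₂ = s_{(2,-1,-1)}` (a Klein four-group), the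
four weights `λ₂ - w λ₂` are W(G2)-conjugate to `0`, `ω₁`, `2ω₂`, `2ω₁+ω₂`:
the identity and the product `s₁s₂` give the `+1` terms `0` and `2ω₁+ω₂`,
and the two reflections give the `-1` terms `ω₁` and `2ω₂`. -/
theorem stmt12 :
    let lam₂ : Fin 3 → ℚ := ![2, -1/2, -3/2]
    let s₁ := refl ![0, 1, -1]
    let s₂ := refl ![2, -1, -1]
    (Function.Involutive s₁ ∧ Function.Involutive s₂ ∧ s₁ ∘ s₂ = s₂ ∘ s₁) ∧
    conj (lam₂ - lam₂) 0 ∧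
    ((conj (lam₂ - s₁ lam₂) ω₁ ∧ conj (lam₂ - s₂ lam₂) ((2 : ℚ) • ω₂)) ∨
     (conj (lam₂ - s₁ lam₂) ((2 : ℚ) • ω₂) ∧ conj (lam₂ - s₂ lam₂) ω₁)) ∧
    conj (lam₂ - s₁ (s₂ lam₂)) ((2 : ℚ) • ω₁ + ω₂) := by
  intro lam₂ s₁ s₂
  have hfun : ∀ v : Fin 3 → ℚ, v = ![v 0, v 1, v 2] := by
    intro v; funext i; fin_cases i <;> rfl
  refine ⟨⟨?_, ?_, ?_⟩, ?_, Or.inl ⟨?_, ?_⟩, ?_⟩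
  · intro v
    rw [hfun v]
    funext i; fin_cases i <;>
      simp [s₁, s₂, refl, dot, Fin.sum_univ_three, Matrix.cons_val_zero, Matrix.cons_val_one] <;> ring
  · intro v
    rw [hfun v]
    funext i; fin_cases i <;>
      simp [s₁, s₂, refl, dot, Fin.sum_univ_three, Matrix.cons_val_zero, Matrix.cons_val_one] <;> ring
  · funext v
    rw [hfun v]
    funext i; fin_cases i <;>
      simp [s₁, s₂, refl, dot, Fin.sum_univ_three, Matrix.cons_val_zero, Matrix.cons_val_one] <;> ring
  · exact ⟨0, false, by
      funext i; fin_cases i <;>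
        simp [s₁, s₂, lam₂, wElt, rot, refl, sα, sβ, dot, Fin.sum_univ_three] <;> norm_num⟩
  · exact ⟨0, true, by
      funext i; fin_cases i <;>
        simp [s₁, s₂, lam₂, wElt, rot, refl, sα, sβ, ω₁, dot, Fin.sum_univ_three] <;> norm_num⟩
  · exact ⟨1, false, by
      funext i; fin_cases i <;>
        simp [s₁, s₂, lam₂, wElt, rot, refl, sα, sβ, ω₂, dot, Fin.sum_univ_three,
          Function.iterate_one] <;> norm_num⟩
  · exact ⟨1, true, by
      funext i; fin_cases i <;>
        simp [s₁, s₂, lam₂, wElt, rot, refl, sα, sβ, ω₁, ω₂, dot, Fin.sum_univ_three,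
          Function.iterate_one] <;> norm_num⟩

end G2
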